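/- arXiv:2303.02964 — 9 statements merged into one kernel-verified Lean document; each statement's English description precedes it below -/
import Mathlib

section
/- For every integer d ≥ 2, there exists a unitary matrix R : Matrix ((Fin d × Fin d)) ((Fin d × Fin d)) ℂ which satisfies the Yang–Baxter (braid) equation and is entangling, i.e., there exists a nonzero decomposable vector φ : Fin d × Fin d → ℂ such that R.mulVec φ is entangled. -/
open Matrix Kronecker

noncomputable section

/-- The matrix `c¹²` acting on legs 1,2 of a triple tensor index. -/
def leg12 {I : Type*} [DecidableEq I] (c : Matrix (I × I) (I × I) ℂ) :
    Matrix (I × I × I) (I × I × I) ℂ :=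
  Matrix.of fun x y =>
    c (x.1, x.2.1) (y.1, y.2.1) * (if x.2.2 = y.2.2 then 1 else 0)

/-- The matrix `c²³` acting on legs 2,3 of a triple tensor index. -/
def leg23 {I : Type*} [DecidableEq I] (c : Matrix (I × I) (I × I) ℂ) :
    Matrix (I × I × I) (I × I × I) ℂ :=
  Matrix.of fun x y =>
    (if x.1 = y.1 then 1 else 0) * c (x.2.1, x.2.2) (y.2.1, y.2.2)

/-- `c` satisfies the Yang–Baxter (braid) equation. -/
def YangBaxter {I : Type*} [Fintype I] [DecidableEq I]
    (c : Matrix (I × I) (I × I) ℂ) : Prop :=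
  leg12 c * leg23 c * leg12 c = leg23 c * leg12 c * leg23 c

/-- A vector on `I × I` is decomposable if it is a tensor product of two vectors. -/
def Decomposable {I : Type*} (φ : I × I → ℂ) : Prop :=
  ∃ α β : I → ℂ, ∀ i j, φ (i, j) = α i * β j

/-- Tracy–Singh product of matrices (canonical block partition). -/
def tsProd {n m : ℕ} (c : Matrix (Fin n × Fin n) (Fin n × Fin n) ℂ)
    (d : Matrix (Fin m × Fin m) (Fin m × Fin m) ℂ) :
    Matrix ((Fin n × Fin m) × (Fin n × Fin m)) ((Fin n × Fin m) × (Fin n × Fin m)) ℂ :=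
  Matrix.of fun x y =>
    c (x.1.1, x.2.1) (y.1.1, y.2.1) * d (x.1.2, x.2.2) (y.1.2, y.2.2)

/-- Tracy–Singh product of vectors (canonical block partition). -/
def tsVec {n m : ℕ} (φ : Fin n × Fin n → ℂ) (ψ : Fin m × Fin m → ℂ) :
    (Fin n × Fin m) × (Fin n × Fin m) → ℂ :=
  fun x => φ (x.1.1, x.2.1) * ψ (x.1.2, x.2.2)

/-- The `(i,k)` block of a matrix on `(Fin n × Fin n)`. -/
def blk {n : ℕ} (c : Matrix (Fin n × Fin n) (Fin n × Fin n) ℂ) (i k : Fin n) :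
    Matrix (Fin n) (Fin n) ℂ :=
  Matrix.of fun a b => c (i, a) (k, b)

/-- The swap (flip) matrix on `I × I`. -/
def swapMat (I : Type*) [DecidableEq I] : Matrix (I × I) (I × I) ℂ :=
  Matrix.of fun x y => (if x.1 = y.2 then 1 else 0) * (if x.2 = y.1 then 1 else 0)


open Matrix Kronecker

noncomputable section

/-- phase swap -/
def phSwap {I : Type*} [DecidableEq I] (q : I → I → ℂ) : Matrix (I × I) (I × I) ℂ :=
  Matrix.of fun x y => if x.1 = y.2 ∧ x.2 = y.1 then q y.1 y.2 else 0

lemma phSwap_yb {I : Type*} [Fintype I] [DecidableEq I] (q : I → I → ℂ) :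
    YangBaxter (phSwap q) := by
  unfold YangBaxter
  ext ⟨i, j, k⟩ ⟨i', j', k'⟩
  simp only [mul_apply, leg12, leg23, phSwap, Matrix.of_apply, Fintype.sum_prod_type]
  simp [Finset.mul_sum, Finset.sum_ite_eq, Finset.sum_ite_eq', ite_and, mul_ite, ite_mul,
    mul_zero, zero_mul, mul_one, one_mul, and_assoc]

  split_ifs <;> ring

lemma phSwap_unitary {I : Type*} [Fintype I] [DecidableEq I] (q : I → I → ℂ)
    (hq : ∀ i j, q i j * (starRingEnd ℂ) (q i j) = 1) :
    phSwap q * (phSwap q)ᴴ = 1 := by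
  ext ⟨a, b⟩ ⟨a', b'⟩
  simp only [mul_apply, conjTranspose_apply, phSwap, Matrix.of_apply, Fintype.sum_prod_type,
    one_apply]
  simp [ite_and, apply_ite, mul_ite, ite_mul, mul_zero, zero_mul, Finset.sum_ite_eq,
    Finset.sum_ite_eq', Prod.ext_iff]
  split_ifs with h1 h2 h3 <;> simp_all [hq]

lemma phSwap_mulVec {I : Type*} [Fintype I] [DecidableEq I] (q : I → I → ℂ)
    (φ : I × I → ℂ) (a b : I) :
    (phSwap q).mulVec φ (a, b) = q b a * φ (b, a) := by
  simp only [mulVec, dotProduct, phSwap, Matrix.of_apply, Fintype.sum_prod_type]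
  simp [ite_and, ite_mul, zero_mul, Finset.sum_ite_eq, Finset.sum_ite_eq']

theorem stmt0 (d : ℕ) (hd : 2 ≤ d) :
    ∃ R : Matrix (Fin d × Fin d) (Fin d × Fin d) ℂ,
      R * Rᴴ = 1 ∧ YangBaxter R ∧
      ∃ φ : Fin d × Fin d → ℂ, φ ≠ 0 ∧ Decomposable φ ∧
        ¬ Decomposable (R.mulVec φ) := by
  obtain ⟨e, rfl⟩ : ∃ e, d = e + 2 := ⟨d - 2, by omega⟩
  set q : Fin (e + 2) → Fin (e + 2) → ℂ := fun i j => if i = 1 ∧ j = 1 then -1 else 1 with hq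
  refine ⟨phSwap q, phSwap_unitary q ?_, phSwap_yb q, (fun _ => 1), ?_, ⟨fun _ => 1, fun _ => 1, by simp⟩, ?_⟩
  · intro i j
    simp only [hq]
    split_ifs <;> norm_num
  · intro h
    have := congrFun h (0, 0)
    simp at this
  · rintro ⟨α, β, hab⟩
    have key : ∀ a b : Fin (e + 2), q b a = α a * β b := by
      intro a b
      have := hab a b
      rwa [phSwap_mulVec, mul_one] at this
    have h00 := key 0 0
    have h01 := key 0 1
    have h10 := key 1 0
    have h11 := key 1 1
    have hne : (0 : Fin (e + 2)) ≠ 1 := Fin.zero_ne_one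
    simp only [hq, hne, Ne.symm hne, and_false, false_and, if_false, if_neg, and_self, if_true,
      if_pos] at h00 h01 h10 h11
    have : (α 0 * β 0) * (α 1 * β 1) = (α 0 * β 1) * (α 1 * β 0) := by ring
    rw [← h00, ← h01, ← h10, ← h11] at this
    norm_num at this
end
end
end

section
/- Let n, m ≥ 1 and let c : Matrix ((Fin n × Fin n)) ((Fin n × Fin n)) ℂ and d : Matrix ((Fin m × Fin m)) ((Fin m × Fin m)) ℂ both satisfy the Yang–Baxter (braid) equation. Then their Tracy–Singh product c ⊠ d, regarded as a matrix on (Fin n × Fin m) × (Fin n × Fin m), also satisfies the Yang–Baxter (braid) equation. -/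
open Matrix Kronecker

noncomputable section

/-- Reshuffling equivalence for the Tracy–Singh triple index. -/
def trEquiv (n m : ℕ) :
    ((Fin n × Fin m) × (Fin n × Fin m) × (Fin n × Fin m)) ≃
      ((Fin n × Fin n × Fin n) × (Fin m × Fin m × Fin m)) where
  toFun x := ((x.1.1, x.2.1.1, x.2.2.1), (x.1.2, x.2.1.2, x.2.2.2))
  invFun y := ((y.1.1, y.2.1), (y.1.2.1, y.2.2.1), (y.1.2.2, y.2.2.2))
  left_inv x := rfl
  right_inv y := rfl

lemma leg12_tsProd {n m : ℕ} (c : Matrix (Fin n × Fin n) (Fin n × Fin n) ℂ)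
    (d : Matrix (Fin m × Fin m) (Fin m × Fin m) ℂ) :
    leg12 (tsProd c d) =
      ((leg12 c) ⊗ₖ (leg12 d)).submatrix (trEquiv n m) (trEquiv n m) := by
  ext x y
  simp only [leg12, tsProd, trEquiv, Matrix.submatrix_apply, Matrix.kroneckerMap_apply,
    Matrix.of_apply, Equiv.coe_fn_mk, Prod.ext_iff]
  by_cases h1 : x.2.2.1 = y.2.2.1 <;> by_cases h2 : x.2.2.2 = y.2.2.2 <;>
    simp [h1, h2] <;> ring

lemma leg23_tsProd {n m : ℕ} (c : Matrix (Fin n × Fin n) (Fin n × Fin n) ℂ)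
    (d : Matrix (Fin m × Fin m) (Fin m × Fin m) ℂ) :
    leg23 (tsProd c d) =
      ((leg23 c) ⊗ₖ (leg23 d)).submatrix (trEquiv n m) (trEquiv n m) := by
  ext x y
  simp only [leg23, tsProd, trEquiv, Matrix.submatrix_apply, Matrix.kroneckerMap_apply,
    Matrix.of_apply, Equiv.coe_fn_mk, Prod.ext_iff]
  by_cases h1 : x.1.1 = y.1.1 <;> by_cases h2 : x.1.2 = y.1.2 <;>
    simp [h1, h2] <;> ring

theorem stmt2 (n m : ℕ) (hn : 1 ≤ n) (hm : 1 ≤ m)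
    (c : Matrix (Fin n × Fin n) (Fin n × Fin n) ℂ)
    (d : Matrix (Fin m × Fin m) (Fin m × Fin m) ℂ)
    (hc : YangBaxter c) (hd : YangBaxter d) :
    YangBaxter (tsProd c d) := by
  unfold YangBaxter
  rw [leg12_tsProd, leg23_tsProd, Matrix.submatrix_mul_equiv, Matrix.submatrix_mul_equiv,
    Matrix.submatrix_mul_equiv, Matrix.submatrix_mul_equiv]
  congr 1
  rw [← Matrix.mul_kronecker_mul, ← Matrix.mul_kronecker_mul, ← Matrix.mul_kronecker_mul,
    ← Matrix.mul_kronecker_mul, hc, hd]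
end
end

section
/- Let c : Matrix ((Fin n × Fin n)) ((Fin n × Fin n)) ℂ satisfy the Yang–Baxter (braid) equation, and let B i k denote its (i,k)-blocks. Then for all i, k : Fin n one has c * ((B i k) ⊗ₖ (1 : Matrix (Fin n) (Fin n) ℂ)) * c = ∑_{ℓ : Fin n} ((B i ℓ) ⊗ₖ 1) * c * ((B ℓ k) ⊗ₖ 1). -/
open Matrix Kronecker

noncomputable section

theorem stmt4 (n : ℕ) (c : Matrix (Fin n × Fin n) (Fin n × Fin n) ℂ)
    (hc : YangBaxter c) (i k : Fin n) :
    c * (blk c i k ⊗ₖ (1 : Matrix (Fin n) (Fin n) ℂ)) * c =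
      ∑ l : Fin n, (blk c i l ⊗ₖ (1 : Matrix (Fin n) (Fin n) ℂ)) * c *
        (blk c l k ⊗ₖ (1 : Matrix (Fin n) (Fin n) ℂ)) := by
  ext ⟨a,p⟩ ⟨b,q⟩
  have h := congrFun (congrFun hc (i,a,p)) (k,b,q)
  simp only [leg12, leg23, YangBaxter, Matrix.mul_apply, Matrix.of_apply,
    Fintype.sum_prod_type, mul_ite, mul_one, mul_zero, ite_mul, zero_mul, one_mul,
    Finset.sum_ite_irrel, Finset.sum_const_zero, Finset.sum_ite_eq, Finset.sum_ite_eq',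
    Finset.mem_univ, if_true] at h
  simp only [Matrix.sum_apply, Matrix.mul_apply, Matrix.kroneckerMap_apply, blk,
    Matrix.of_apply, Matrix.one_apply, Fintype.sum_prod_type, mul_ite, mul_one, mul_zero,
    ite_mul, zero_mul, one_mul, Finset.sum_ite_eq, Finset.sum_ite_eq', Finset.mem_univ, if_true]
  exact h.symm
end
end

section
/- Let c : Matrix ((Fin n × Fin n)) ((Fin n × Fin n)) ℂ and d : Matrix ((Fin m × Fin m)) ((Fin m × Fin m)) ℂ be matrices, with blocks B i k (for c) and B' p q (for d). Then the Tracy–Singh product c ⊠ d satisfies the Yang–Baxter (braid) equation if and only if for all i, k : Fin n and all p, q : Fin m one has (c ⊠ d) * (((B i k) ⊗ₖ (B' p q)) ⊗ₖ (1 : Matrix (Fin n × Fin m) (Fin n × Fin m) ℂ)) * (c ⊠ d) = ∑_{u : Fin n} ∑_{v : Fin m} (((B i u) ⊗ₖ (B' p v)) ⊗ₖ 1) * (c ⊠ d) * (((B u k) ⊗ₖ (B' v q)) ⊗ₖ 1). -/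
open Matrix Kronecker

noncomputable section

section Aux

lemma sum6_13 {M : Type*} [AddCommMonoid M] {α β γ δ ε ζ : Type*}
    [Fintype α] [Fintype β] [Fintype γ] [Fintype δ] [Fintype ε] [Fintype ζ]
    (f : α → β → γ → δ → ε → ζ → M) :
    (∑ a, ∑ b, ∑ c, ∑ d, ∑ e, ∑ g, f a b c d e g) =
      ∑ a : ε, ∑ b : ζ, ∑ c, ∑ d, ∑ e : α, ∑ g : β, f e g c d a b := by
  calc (∑ a, ∑ b, ∑ c, ∑ d, ∑ e, ∑ g, f a b c d e g)
      = ∑ x : (α × β) × (γ × δ) × ε × ζ,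
          f x.1.1 x.1.2 x.2.1.1 x.2.1.2 x.2.2.1 x.2.2.2 := by
        simp only [Fintype.sum_prod_type]
    _ = ∑ x : (ε × ζ) × (γ × δ) × α × β,
          f x.2.2.1 x.2.2.2 x.2.1.1 x.2.1.2 x.1.1 x.1.2 := by
        exact Fintype.sum_equiv ⟨fun x => (x.2.2, x.2.1, x.1), fun x => (x.2.2, x.2.1, x.1),
          fun _ => rfl, fun _ => rfl⟩ _ _ (fun _ => rfl)
    _ = _ := by simp only [Fintype.sum_prod_type]

lemma sum6_23 {M : Type*} [AddCommMonoid M] {α β γ δ ε ζ : Type*}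
    [Fintype α] [Fintype β] [Fintype γ] [Fintype δ] [Fintype ε] [Fintype ζ]
    (f : α → β → γ → δ → ε → ζ → M) :
    (∑ a, ∑ b, ∑ c, ∑ d, ∑ e, ∑ g, f a b c d e g) =
      ∑ a, ∑ b, ∑ c : ε, ∑ d : ζ, ∑ e : γ, ∑ g : δ, f a b e g c d := by
  calc (∑ a, ∑ b, ∑ c, ∑ d, ∑ e, ∑ g, f a b c d e g)
      = ∑ x : (α × β) × (γ × δ) × ε × ζ,
          f x.1.1 x.1.2 x.2.1.1 x.2.1.2 x.2.2.1 x.2.2.2 := by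
        simp only [Fintype.sum_prod_type]
    _ = ∑ x : (α × β) × (ε × ζ) × γ × δ,
          f x.1.1 x.1.2 x.2.2.1 x.2.2.2 x.2.1.1 x.2.1.2 := by
        exact Fintype.sum_equiv ⟨fun x => (x.1, x.2.2, x.2.1), fun x => (x.1, x.2.2, x.2.1),
          fun _ => rfl, fun _ => rfl⟩ _ _ (fun _ => rfl)
    _ = _ := by simp only [Fintype.sum_prod_type]

/-- Entry formula for `c¹² c²³ c¹²`. -/
lemma leg121_apply {I : Type*} [Fintype I] [DecidableEq I] (T : Matrix (I × I) (I × I) ℂ)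
    (x y : I × I × I) :
    (leg12 T * leg23 T * leg12 T) x y =
      ∑ u1 : I, ∑ u2 : I, ∑ v2 : I,
        T (x.1, x.2.1) (u1, u2) * T (u2, x.2.2) (v2, y.2.2) * T (u1, v2) (y.1, y.2.1) := by
  simp only [Matrix.mul_apply, leg12, leg23, Matrix.of_apply, Fintype.sum_prod_type,
    mul_ite, mul_one, mul_zero, ite_mul, zero_mul, one_mul,
    Finset.sum_ite_eq, Finset.sum_ite_eq', Finset.mem_univ, if_true,
    Finset.sum_mul, Finset.mul_sum, Finset.sum_ite_irrel, Finset.sum_const_zero]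
  exact Finset.sum_congr rfl fun u1 _ => Finset.sum_comm

/-- Entry formula for `c²³ c¹² c²³`. -/
lemma leg232_apply {I : Type*} [Fintype I] [DecidableEq I] (T : Matrix (I × I) (I × I) ℂ)
    (x y : I × I × I) :
    (leg23 T * leg12 T * leg23 T) x y =
      ∑ u2 : I, ∑ u3 : I, ∑ v2 : I,
        T (x.2.1, x.2.2) (u2, u3) * T (x.1, u2) (y.1, v2) * T (v2, u3) (y.2.1, y.2.2) := by
  simp only [Matrix.mul_apply, leg12, leg23, Matrix.of_apply, Fintype.sum_prod_type,
    mul_ite, mul_one, mul_zero, ite_mul, zero_mul, one_mul,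
    Finset.sum_ite_eq, Finset.sum_ite_eq', Finset.mem_univ, if_true,
    Finset.sum_mul, Finset.mul_sum, Finset.sum_ite_irrel, Finset.sum_const_zero]
  rw [show (∑ a : I, ∑ b : I, ∑ c : I,
      T (x.2.1, x.2.2) (c, b) * T (x.1, c) (y.1, a) * T (a, b) (y.2.1, y.2.2)) =
      ∑ a : I, ∑ c : I, ∑ b : I,
      T (x.2.1, x.2.2) (c, b) * T (x.1, c) (y.1, a) * T (a, b) (y.2.1, y.2.2) from
    Finset.sum_congr rfl fun _ _ => Finset.sum_comm, Finset.sum_comm]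
  exact Finset.sum_congr rfl fun _ _ => Finset.sum_comm

/-- Bridge: the left-hand side of the block equation is an entry of `c²³ c¹² c²³`. -/
lemma bridgeL (n m : ℕ) (c : Matrix (Fin n × Fin n) (Fin n × Fin n) ℂ)
    (d : Matrix (Fin m × Fin m) (Fin m × Fin m) ℂ) (i k : Fin n) (p q : Fin m)
    (X Y : (Fin n × Fin m) × (Fin n × Fin m)) :
    (tsProd c d *
        ((blk c i k ⊗ₖ blk d p q) ⊗ₖ (1 : Matrix (Fin n × Fin m) (Fin n × Fin m) ℂ)) *
        tsProd c d) X Y =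
      (leg23 (tsProd c d) * leg12 (tsProd c d) * leg23 (tsProd c d))
        ((i, p), X.1, X.2) ((k, q), Y.1, Y.2) := by
  rw [leg232_apply]
  simp only [Matrix.mul_apply, tsProd, blk, Matrix.of_apply, Matrix.kroneckerMap_apply,
    Matrix.one_apply, Fintype.sum_prod_type, mul_ite, mul_one, mul_zero, ite_mul, zero_mul,
    one_mul, Finset.sum_ite_irrel, Finset.sum_const_zero, Finset.sum_ite_eq,
    Finset.sum_ite_eq', Finset.mem_univ, if_true, Finset.sum_mul, Finset.mul_sum]
  exact sum6_13 fun a b c' d' e g =>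
    c (X.1.1, X.2.1) (e, c') * d (X.1.2, X.2.2) (g, d') *
      (c (i, e) (k, a) * d (p, g) (q, b)) *
      (c (a, c') (Y.1.1, Y.2.1) * d (b, d') (Y.1.2, Y.2.2))

/-- Bridge: the right-hand side of the block equation is an entry of `c¹² c²³ c¹²`. -/
lemma bridgeR (n m : ℕ) (c : Matrix (Fin n × Fin n) (Fin n × Fin n) ℂ)
    (d : Matrix (Fin m × Fin m) (Fin m × Fin m) ℂ) (i k : Fin n) (p q : Fin m)
    (X Y : (Fin n × Fin m) × (Fin n × Fin m)) :
    (∑ u : Fin n, ∑ v : Fin m,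
        ((blk c i u ⊗ₖ blk d p v) ⊗ₖ (1 : Matrix (Fin n × Fin m) (Fin n × Fin m) ℂ)) *
          tsProd c d *
          ((blk c u k ⊗ₖ blk d v q) ⊗ₖ (1 : Matrix (Fin n × Fin m) (Fin n × Fin m) ℂ))) X Y =
      (leg12 (tsProd c d) * leg23 (tsProd c d) * leg12 (tsProd c d))
        ((i, p), X.1, X.2) ((k, q), Y.1, Y.2) := by
  rw [leg121_apply]
  simp only [Matrix.sum_apply, Matrix.mul_apply, tsProd, blk, Matrix.of_apply,
    Matrix.kroneckerMap_apply, Matrix.one_apply, Fintype.sum_prod_type, mul_ite, mul_one,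
    mul_zero, ite_mul, zero_mul, one_mul, Finset.sum_ite_irrel, Finset.sum_const_zero,
    Finset.sum_ite_eq, Finset.sum_ite_eq', Finset.mem_univ, if_true, Finset.sum_mul,
    Finset.mul_sum]
  exact sum6_23 fun a b c' d' e g =>
    c (i, X.1.1) (a, e) * d (p, X.1.2) (b, g) *
      (c (e, X.2.1) (c', Y.2.1) * d (g, X.2.2) (d', Y.2.2)) *
      (c (a, c') (k, Y.1.1) * d (b, d') (q, Y.1.2))

end Aux

theorem stmt5 (n m : ℕ)
    (c : Matrix (Fin n × Fin n) (Fin n × Fin n) ℂ)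
    (d : Matrix (Fin m × Fin m) (Fin m × Fin m) ℂ) :
    YangBaxter (tsProd c d) ↔
      ∀ (i k : Fin n) (p q : Fin m),
        tsProd c d *
            ((blk c i k ⊗ₖ blk d p q) ⊗ₖ (1 : Matrix (Fin n × Fin m) (Fin n × Fin m) ℂ)) *
            tsProd c d =
          ∑ u : Fin n, ∑ v : Fin m,
            ((blk c i u ⊗ₖ blk d p v) ⊗ₖ (1 : Matrix (Fin n × Fin m) (Fin n × Fin m) ℂ)) *
              tsProd c d *
              ((blk c u k ⊗ₖ blk d v q) ⊗ₖ (1 : Matrix (Fin n × Fin m) (Fin n × Fin m) ℂ)) := by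
  constructor
  · intro h i k p q
    ext X Y
    rw [bridgeL, bridgeR, ← h]
  · intro h
    unfold YangBaxter
    ext x y
    have h2 := congrFun (congrFun (h x.1.1 y.1.1 x.1.2 y.1.2) (x.2.1, x.2.2)) (y.2.1, y.2.2)
    rw [bridgeL, bridgeR] at h2
    simpa using h2.symm
end
end

section
/- Let c : Matrix ((Fin n × Fin n)) ((Fin n × Fin n)) ℂ and d : Matrix ((Fin m × Fin m)) ((Fin m × Fin m)) ℂ both satisfy the Yang–Baxter (braid) equation, with blocks B i k (for c) and B' p q (for d). Then for all i, k : Fin n and all p, q : Fin m: (c ⊠ d) * (((B i k) ⊗ₖ (B' p q)) ⊗ₖ (1 : Matrix (Fin n × Fin m) (Fin n × Fin m) ℂ)) * (c ⊠ d) = ∑_{u : Fin n} ∑_{v : Fin m} (((B i u) ⊗ₖ (B' p v)) ⊗ₖ 1) * (c ⊠ d) * (((B u k) ⊗ₖ (B' v q)) ⊗ₖ 1). -/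
open Matrix Kronecker

noncomputable section

lemma ybe_block {n : ℕ} (c : Matrix (Fin n × Fin n) (Fin n × Fin n) ℂ)
    (hc : YangBaxter c) (i k : Fin n) :
    c * (blk c i k ⊗ₖ (1 : Matrix (Fin n) (Fin n) ℂ)) * c =
      ∑ u : Fin n, (blk c i u ⊗ₖ (1 : Matrix (Fin n) (Fin n) ℂ)) * c *
        (blk c u k ⊗ₖ (1 : Matrix (Fin n) (Fin n) ℂ)) := by
  ext ⟨a, b⟩ ⟨a', b'⟩
  have h := congrFun (congrFun hc (i, a, b)) (k, a', b')
  simp only [Matrix.mul_apply, leg12, leg23, Matrix.of_apply, Fintype.sum_prod_type,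
    Matrix.kroneckerMap_apply, Matrix.one_apply, blk, Matrix.sum_apply,
    mul_ite, mul_one, mul_zero, ite_mul, one_mul, zero_mul, Finset.sum_ite_irrel,
    Finset.sum_ite_eq, Finset.sum_ite_eq', Finset.mem_univ, if_true,
    Finset.sum_const_zero] at h ⊢
  exact h.symm

lemma kron_sum_sum {α β : Type*} [Fintype α] [Fintype β] {I J K L : Type*}
    (f : α → Matrix I J ℂ) (g : β → Matrix K L ℂ) :
    (∑ u : α, f u) ⊗ₖ (∑ v : β, g v) = ∑ u : α, ∑ v : β, f u ⊗ₖ g v := by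
  ext x y
  simp [Matrix.kroneckerMap_apply, Matrix.sum_apply, Finset.sum_mul_sum]

lemma tsProd_eq {n m : ℕ} (c : Matrix (Fin n × Fin n) (Fin n × Fin n) ℂ)
    (d : Matrix (Fin m × Fin m) (Fin m × Fin m) ℂ) :
    tsProd c d = Matrix.reindexAlgEquiv ℂ ℂ
      (Equiv.prodProdProdComm (Fin n) (Fin n) (Fin m) (Fin m)) (c ⊗ₖ d) := by
  ext ⟨⟨a, x⟩, ⟨b, y⟩⟩ ⟨⟨a', x'⟩, ⟨b', y'⟩⟩
  rfl

lemma kron_one_eq {n m : ℕ} (A : Matrix (Fin n) (Fin n) ℂ) (A' : Matrix (Fin m) (Fin m) ℂ) :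
    (A ⊗ₖ A') ⊗ₖ (1 : Matrix (Fin n × Fin m) (Fin n × Fin m) ℂ) =
      Matrix.reindexAlgEquiv ℂ ℂ
        (Equiv.prodProdProdComm (Fin n) (Fin n) (Fin m) (Fin m))
        ((A ⊗ₖ (1 : Matrix (Fin n) (Fin n) ℂ)) ⊗ₖ (A' ⊗ₖ (1 : Matrix (Fin m) (Fin m) ℂ))) := by
  ext ⟨⟨u, v⟩, ⟨a, x⟩⟩ ⟨⟨u', v'⟩, ⟨b, y⟩⟩
  simp [Matrix.kroneckerMap_apply, Matrix.one_apply, Equiv.prodProdProdComm, Prod.ext_iff,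
    ite_and, mul_ite, mul_one, mul_zero, ite_mul, one_mul, zero_mul]
  ring_nf
  by_cases h1 : a = b <;> by_cases h2 : x = y <;> simp [h1, h2]
theorem stmt7 (n m : ℕ)
    (c : Matrix (Fin n × Fin n) (Fin n × Fin n) ℂ)
    (d : Matrix (Fin m × Fin m) (Fin m × Fin m) ℂ)
    (hc : YangBaxter c) (hd : YangBaxter d) :
    ∀ (i k : Fin n) (p q : Fin m),
      tsProd c d *
          ((blk c i k ⊗ₖ blk d p q) ⊗ₖ (1 : Matrix (Fin n × Fin m) (Fin n × Fin m) ℂ)) *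
          tsProd c d =
        ∑ u : Fin n, ∑ v : Fin m,
          ((blk c i u ⊗ₖ blk d p v) ⊗ₖ (1 : Matrix (Fin n × Fin m) (Fin n × Fin m) ℂ)) *
            tsProd c d *
            ((blk c u k ⊗ₖ blk d v q) ⊗ₖ (1 : Matrix (Fin n × Fin m) (Fin n × Fin m) ℂ)) := by
  intro i k p q
  set e := Equiv.prodProdProdComm (Fin n) (Fin n) (Fin m) (Fin m)
  rw [tsProd_eq, kron_one_eq]
  simp only [kron_one_eq, ← _root_.map_mul, ← map_sum]
  congr 1
  rw [← mul_kronecker_mul, ← mul_kronecker_mul, ybe_block c hc, ybe_block d hd, kron_sum_sum]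
  refine Finset.sum_congr rfl fun u _ => Finset.sum_congr rfl fun v _ => ?_
  rw [← mul_kronecker_mul, ← mul_kronecker_mul]
end
end

section
/- Let φ : Fin n × Fin n → ℂ and ψ : Fin m × Fin m → ℂ be nonzero vectors. Then φ ⊠ ψ is decomposable (as a vector on (Fin n × Fin m) × (Fin n × Fin m)) if and only if both φ and ψ are decomposable. -/
open Matrix Kronecker

noncomputable section

theorem stmt13 (n m : ℕ) (φ : Fin n × Fin n → ℂ) (ψ : Fin m × Fin m → ℂ)
    (hφ : φ ≠ 0) (hψ : ψ ≠ 0) :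
    Decomposable (tsVec φ ψ) ↔ Decomposable φ ∧ Decomposable ψ := by
  constructor
  · rintro ⟨A, B, hAB⟩
    obtain ⟨x, hx⟩ := Function.ne_iff.mp hφ
    obtain ⟨y, hy⟩ := Function.ne_iff.mp hψ
    simp only [Pi.zero_apply] at hx hy
    constructor
    · refine ⟨fun i => A (i, y.1), fun j => B (j, y.2) / ψ y, fun i j => ?_⟩
      have h := hAB (i, y.1) (j, y.2)
      simp only [tsVec] at h
      rw [Prod.mk.eta] at h
      field_simp [hy]
      linear_combination h
    · refine ⟨fun p => A (x.1, p), fun q => B (x.2, q) / φ x, fun p q => ?_⟩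
      have h := hAB (x.1, p) (x.2, q)
      simp only [tsVec] at h
      rw [Prod.mk.eta] at h
      field_simp [hx]
      linear_combination h
  · rintro ⟨⟨a, b, hab⟩, ⟨c, d, hcd⟩⟩
    exact ⟨fun i => a i.1 * c i.2, fun j => b j.1 * d j.2, fun i j => by
      simp only [tsVec, hab, hcd]; ring⟩
end
end

section
/- Let c : Matrix ((Fin n × Fin n)) ((Fin n × Fin n)) ℂ and d : Matrix ((Fin m × Fin m)) ((Fin m × Fin m)) ℂ be unitary matrices. Suppose φ : Fin n × Fin n → ℂ is decomposable and c.mulVec φ is entangled, and suppose ψ : Fin m × Fin m → ℂ is decomposable and nonzero. Then φ ⊠ ψ is decomposable and (c ⊠ d).mulVec (φ ⊠ ψ) is entangled. -/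
open Matrix Kronecker

noncomputable section

def tsEquiv (n m : ℕ) :
    ((Fin n × Fin n) × (Fin m × Fin m)) ≃ ((Fin n × Fin m) × (Fin n × Fin m)) where
  toFun p := ((p.1.1, p.2.1), (p.1.2, p.2.2))
  invFun p := ((p.1.1, p.2.1), (p.1.2, p.2.2))
  left_inv _ := rfl
  right_inv _ := rfl

lemma tsProd_mulVec {n m : ℕ} (c : Matrix (Fin n × Fin n) (Fin n × Fin n) ℂ)
    (d : Matrix (Fin m × Fin m) (Fin m × Fin m) ℂ)
    (φ : Fin n × Fin n → ℂ) (ψ : Fin m × Fin m → ℂ) :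
    (tsProd c d).mulVec (tsVec φ ψ) = tsVec (c.mulVec φ) (d.mulVec ψ) := by
  funext x
  simp only [Matrix.mulVec, dotProduct, tsProd, tsVec, Matrix.of_apply]
  rw [Finset.sum_mul_sum, ← Equiv.sum_comp (tsEquiv n m), Fintype.sum_prod_type]
  refine Finset.sum_congr rfl fun i _ => Finset.sum_congr rfl fun j _ => ?_
  simp [tsEquiv]; ring

theorem stmt15 (n m : ℕ)
    (c : Matrix (Fin n × Fin n) (Fin n × Fin n) ℂ)
    (d : Matrix (Fin m × Fin m) (Fin m × Fin m) ℂ)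
    (hc : c * cᴴ = 1) (hd : d * dᴴ = 1)
    (φ : Fin n × Fin n → ℂ) (hφd : Decomposable φ)
    (hφe : ¬ Decomposable (c.mulVec φ))
    (ψ : Fin m × Fin m → ℂ) (hψd : Decomposable ψ) (hψ0 : ψ ≠ 0) :
    Decomposable (tsVec φ ψ) ∧
      ¬ Decomposable ((tsProd c d).mulVec (tsVec φ ψ)) := by
  obtain ⟨α, β, hαβ⟩ := hφd
  obtain ⟨γ, δ, hγδ⟩ := hψd
  constructor
  · refine ⟨fun p => α p.1 * γ p.2, fun p => β p.1 * δ p.2, fun i j => ?_⟩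
    simp only [tsVec, hαβ, hγδ]
    ring
  · intro hdec
    rw [tsProd_mulVec] at hdec
    obtain ⟨A, B, hAB⟩ := hdec
    have hdne : d.mulVec ψ ≠ 0 := by
      intro h0
      have h1 : dᴴ * d = 1 := mul_eq_one_comm.mp hd
      apply hψ0
      calc ψ = (dᴴ * d).mulVec ψ := by rw [h1, Matrix.one_mulVec]
        _ = dᴴ.mulVec (d.mulVec ψ) := by rw [← Matrix.mulVec_mulVec]
        _ = 0 := by rw [h0, Matrix.mulVec_zero]
    obtain ⟨pq, hpq⟩ : ∃ pq, d.mulVec ψ pq ≠ 0 := by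
      by_contra h; push_neg at h; exact hdne (funext h)
    apply hφe
    refine ⟨fun i => A (i, pq.1) / (d.mulVec ψ pq), fun j => B (j, pq.2), fun i j => ?_⟩
    have h := hAB (i, pq.1) (j, pq.2)
    simp only [tsVec] at h
    rw [Prod.mk.eta] at h
    field_simp
    rw [← h]
end
end

section
/- For a finite type I, let S_I : Matrix (I × I) (I × I) ℂ be the swap matrix, S_I ((i,j),(k,l)) = (if i = l then 1 else 0) * (if j = k then 1 else 0). Let c₁, c₂ : Matrix (Fin n) (Fin n) ℂ and d₁, d₂ : Matrix (Fin m) (Fin m) ℂ, and set c = (c₁ ⊗ₖ c₂) * S_{Fin n} and d = (d₁ ⊗ₖ d₂) * S_{Fin m}. Then c ⊠ d = ((c₁ ⊗ₖ d₁) ⊗ₖ (c₂ ⊗ₖ d₂)) * S_{Fin n × Fin m}; consequently, for every decomposable vector χ : (Fin n × Fin m) × (Fin n × Fin m) → ℂ, the vector (c ⊠ d).mulVec χ is decomposable. -/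
open Matrix Kronecker

noncomputable section

lemma kron_swap_apply {I : Type*} [Fintype I] [DecidableEq I]
    (A B : Matrix I I ℂ) (i p j q : I) :
    ((A ⊗ₖ B) * swapMat I) ((i,p)) ((j,q)) = A i q * B p j := by
  simp [Matrix.mul_apply, swapMat, Matrix.kroneckerMap_apply, Fintype.sum_prod_type,
    mul_ite, ite_mul, Finset.sum_ite_eq, Finset.sum_ite_eq']

theorem stmt17 (n m : ℕ)
    (c₁ c₂ : Matrix (Fin n) (Fin n) ℂ) (d₁ d₂ : Matrix (Fin m) (Fin m) ℂ) :
    tsProd ((c₁ ⊗ₖ c₂) * swapMat (Fin n)) ((d₁ ⊗ₖ d₂) * swapMat (Fin m)) =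
        ((c₁ ⊗ₖ d₁) ⊗ₖ (c₂ ⊗ₖ d₂)) * swapMat (Fin n × Fin m) ∧
      ∀ χ : (Fin n × Fin m) × (Fin n × Fin m) → ℂ, Decomposable χ →
        Decomposable
          ((tsProd ((c₁ ⊗ₖ c₂) * swapMat (Fin n))
              ((d₁ ⊗ₖ d₂) * swapMat (Fin m))).mulVec χ) := by
  constructor
  · ext ⟨⟨i,p⟩,⟨a,x⟩⟩ ⟨⟨j,q⟩,⟨b,y⟩⟩
    rw [show (((c₁ ⊗ₖ d₁) ⊗ₖ (c₂ ⊗ₖ d₂)) * swapMat (Fin n × Fin m)) ((i,p),(a,x)) ((j,q),(b,y))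
        = ((c₁ ⊗ₖ d₁) ⊗ₖ (c₂ ⊗ₖ d₂)) ((i,p),(a,x)) ((b,y),(j,q)) from
      kron_swap_apply (c₁ ⊗ₖ d₁) (c₂ ⊗ₖ d₂) (i,p) (a,x) (j,q) (b,y)]
    simp only [tsProd, Matrix.of_apply, kron_swap_apply, Matrix.kroneckerMap_apply]
    ring
  · rintro χ ⟨α, β, hχ⟩
    refine ⟨fun u => ∑ b, ∑ y, c₁ u.1 b * d₁ u.2 y * β (b,y),
      fun v => ∑ j, ∑ q, c₂ v.1 j * d₂ v.2 q * α (j,q), ?_⟩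
    rintro ⟨i,p⟩ ⟨a,x⟩
    simp only [Matrix.mulVec, dotProduct, tsProd, Matrix.of_apply, kron_swap_apply, hχ]
    have key : ∀ (f g : (Fin n × Fin m) → ℂ),
        (∑ uv : (Fin n × Fin m) × (Fin n × Fin m), f uv.1 * g uv.2)
          = (∑ u, f u) * (∑ v, g v) := by
      intro f g
      rw [Fintype.sum_prod_type, Finset.sum_mul_sum]
    trans (∑ u : Fin n × Fin m, c₂ a u.1 * d₂ x u.2 * α u) *
      (∑ v : Fin n × Fin m, c₁ i v.1 * d₁ p v.2 * β v)
    · rw [← key]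
      exact Finset.sum_congr rfl fun uv _ => by ring
    · rw [mul_comm, Fintype.sum_prod_type, Fintype.sum_prod_type]
end
end

section
/- Let p ≥ 3 be an odd prime. Identify Fin p with {1,…,p} and let γ be the permutation of {1,…,p} which swaps 2k−1 and 2k for each k = 1,…,(p−1)/2 and fixes p (i.e., γ = (1,2)(3,4)⋯(p−2,p−1)). Let ρ be the bijection of Fin p × Fin p defined by ρ(i,j) = (j,i) if i ≠ p and j ≠ p, ρ(i,p) = (p, γ(i)) for i ≠ p, ρ(p,j) = (γ(j), p) for j ≠ p, and ρ(p,p) = (p,p); let r : Matrix ((Fin p × Fin p)) ((Fin p × Fin p)) ℂ be the associated permutation matrix, r ((k,l),(i,j)) = if (k,l) = ρ(i,j) then 1 else 0. Then: (a) r is unitary; (b) r satisfies the Yang–Baxter (braid) equation; (c) there do not exist matrices A, B : Matrix (Fin p) (Fin p) ℂ with r = A ⊗ₖ B, and there do not exist matrices A, B : Matrix (Fin p) (Fin p) ℂ with r = (A ⊗ₖ B) * S, where S is the swap matrix S ((i,j),(k,l)) = (if i = l then 1 else 0) * (if j = k then 1 else 0). -/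
open Matrix Kronecker

noncomputable section

/-- The permutation `(1,2)(3,4)⋯(p−2,p−1)` of `{1,…,p}` in 0-based coordinates:
it swaps `2k` and `2k+1` for `2k+1 < p − 1` and fixes the last element. -/
def gam (p : ℕ) : Fin p → Fin p := fun i =>
  if _h : (i : ℕ) = p - 1 then i
  else if _h2 : (i : ℕ) % 2 = 0 then
    ⟨(i : ℕ) + 1, by have := i.isLt; omega⟩
  else
    ⟨(i : ℕ) - 1, by have := i.isLt; omega⟩

/-- The map `ρ` on `Fin p × Fin p`: `ρ(i,j) = (j,i)` if `i,j ≠ p`,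
`ρ(i,p) = (p, γ(i))`, `ρ(p,j) = (γ(j), p)`, `ρ(p,p) = (p,p)`
(the element `p` being the last element of `Fin p`). -/
def rho (p : ℕ) : Fin p × Fin p → Fin p × Fin p := fun x =>
  if (x.1 : ℕ) = p - 1 then
    (if (x.2 : ℕ) = p - 1 then x else (gam p x.2, x.1))
  else if (x.2 : ℕ) = p - 1 then (x.2, gam p x.1)
  else (x.2, x.1)

/-- The permutation matrix of `ρ`. -/
def rmat (p : ℕ) : Matrix (Fin p × Fin p) (Fin p × Fin p) ℂ :=
  Matrix.of fun x y => if x = rho p y then 1 else 0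

lemma gam_val {p : ℕ} (i : Fin p) :
    ((gam p i : Fin p) : ℕ) =
      if (i : ℕ) = p - 1 then (i : ℕ)
      else if (i : ℕ) % 2 = 0 then (i : ℕ) + 1 else (i : ℕ) - 1 := by
  unfold gam
  split_ifs <;> rfl

lemma gam_ne_last {p : ℕ} (hodd : Odd p) (i : Fin p) (h : (i : ℕ) ≠ p - 1) :
    ((gam p i : Fin p) : ℕ) ≠ p - 1 := by
  obtain ⟨m, rfl⟩ := hodd
  have := i.isLt
  rw [gam_val]
  split_ifs <;> omega

lemma gam_gam {p : ℕ} (hodd : Odd p) (i : Fin p) : gam p (gam p i) = i := by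
  obtain ⟨m, rfl⟩ := hodd
  have h1 := i.isLt
  apply Fin.ext
  rw [gam_val, gam_val]
  split_ifs <;> omega

lemma rho_swap {p : ℕ} {i j : Fin p} (hi : (i : ℕ) ≠ p - 1) (hj : (j : ℕ) ≠ p - 1) :
    rho p (i, j) = (j, i) := by simp [rho, hi, hj]

lemma rho_right {p : ℕ} {i j : Fin p} (hi : (i : ℕ) ≠ p - 1) (hj : (j : ℕ) = p - 1) :
    rho p (i, j) = (j, gam p i) := by simp [rho, hi, hj]

lemma rho_left {p : ℕ} {i j : Fin p} (hi : (i : ℕ) = p - 1) (hj : (j : ℕ) ≠ p - 1) :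
    rho p (i, j) = (gam p j, i) := by simp [rho, hi, hj]

lemma rho_fix {p : ℕ} {i j : Fin p} (hi : (i : ℕ) = p - 1) (hj : (j : ℕ) = p - 1) :
    rho p (i, j) = (i, j) := by simp [rho, hi, hj]

lemma rho_rho {p : ℕ} (hodd : Odd p) (x : Fin p × Fin p) : rho p (rho p x) = x := by
  obtain ⟨i, j⟩ := x
  by_cases hi : (i : ℕ) = p - 1 <;> by_cases hj : (j : ℕ) = p - 1
  · rw [rho_fix hi hj, rho_fix hi hj]
  · rw [rho_left hi hj, rho_right (gam_ne_last hodd j hj) hi, gam_gam hodd]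
  · rw [rho_right hi hj, rho_left hj (gam_ne_last hodd i hi), gam_gam hodd]
  · rw [rho_swap hi hj, rho_swap hj hi]

def F12 (p : ℕ) (x : Fin p × Fin p × Fin p) : Fin p × Fin p × Fin p :=
  ((rho p (x.1, x.2.1)).1, (rho p (x.1, x.2.1)).2, x.2.2)

def F23 (p : ℕ) (x : Fin p × Fin p × Fin p) : Fin p × Fin p × Fin p :=
  (x.1, rho p (x.2.1, x.2.2))

lemma yb_fun {p : ℕ} (hodd : Odd p) (x : Fin p × Fin p × Fin p) :
    F12 p (F23 p (F12 p x)) = F23 p (F12 p (F23 p x)) := by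
  obtain ⟨i, j, k⟩ := x
  by_cases hi : (i : ℕ) = p - 1 <;> by_cases hj : (j : ℕ) = p - 1 <;>
    by_cases hk : (k : ℕ) = p - 1 <;>
    simp_all [F12, F23, rho_swap, rho_right, rho_left, rho_fix,
      gam_gam hodd, gam_ne_last hodd]

def pmat {α : Type*} [DecidableEq α] (f : α → α) : Matrix α α ℂ :=
  Matrix.of fun x y => if x = f y then (1 : ℂ) else 0

lemma mul_pmat {α : Type*} [Fintype α] [DecidableEq α]
    (M : Matrix α α ℂ) (f : α → α) :
    M * pmat f = Matrix.of fun x y => M x (f y) := by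
  ext x y
  simp [Matrix.mul_apply, pmat, mul_ite, mul_one, mul_zero]

lemma pmat_mul_pmat {α : Type*} [Fintype α] [DecidableEq α] (f g : α → α) :
    pmat f * pmat g = pmat (f ∘ g) := by
  rw [mul_pmat]; rfl

lemma leg12_rmat (p : ℕ) : leg12 (rmat p) = pmat (F12 p) := by
  ext x y
  simp only [leg12, rmat, Matrix.of_apply, pmat, F12]
  split_ifs with h1 h2 h3 h3 <;> simp_all [Prod.ext_iff]

lemma leg23_rmat (p : ℕ) : leg23 (rmat p) = pmat (F23 p) := by
  ext x y
  simp only [leg23, rmat, Matrix.of_apply, pmat, F23]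
  split_ifs with h1 h2 h3 h3 <;> simp_all [Prod.ext_iff]

lemma yb_rmat {p : ℕ} (hodd : Odd p) : YangBaxter (rmat p) := by
  unfold YangBaxter
  rw [leg12_rmat, leg23_rmat, pmat_mul_pmat, pmat_mul_pmat, pmat_mul_pmat, pmat_mul_pmat]
  unfold pmat
  ext x y
  simp only [Matrix.of_apply, Function.comp]
  exact if_congr (by rw [yb_fun hodd y]) rfl rfl

lemma rmat_unitary {p : ℕ} (hodd : Odd p) : rmat p * (rmat p)ᴴ = 1 := by
  have hH : (rmat p)ᴴ = rmat p := by
    ext x y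
    simp only [Matrix.conjTranspose_apply, rmat, Matrix.of_apply]
    by_cases h : x = rho p y
    · have h2 : y = rho p x := by rw [h, rho_rho hodd]
      rw [if_pos h2, if_pos h]; exact star_one ℂ
    · have h2 : y ≠ rho p x := fun hy => h (by rw [hy, rho_rho hodd])
      rw [if_neg h2, if_neg h]; exact star_zero ℂ
  rw [hH]
  have : rmat p = pmat (rho p) := rfl
  rw [this, pmat_mul_pmat]
  ext x y
  simp only [pmat, Matrix.of_apply, Function.comp, rho_rho hodd, Matrix.one_apply]

lemma swapMat_eq (p : ℕ) : swapMat (Fin p) = pmat (fun y : Fin p × Fin p => (y.2, y.1)) := by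
  ext x y
  simp only [swapMat, pmat, Matrix.of_apply]
  split_ifs with h1 h2 h3 h3 <;> simp_all [Prod.ext_iff]

lemma not_kron {p : ℕ} (h3 : 3 ≤ p) :
    ¬ ∃ A B : Matrix (Fin p) (Fin p) ℂ, rmat p = A ⊗ₖ B := by
  rintro ⟨A, B, h⟩
  have e : ∀ x y : Fin p × Fin p, rmat p x y = A x.1 y.1 * B x.2 y.2 := by
    intro x y; rw [h]; rfl
  set z : Fin p := ⟨0, by omega⟩ with hzdef
  set o : Fin p := ⟨1, by omega⟩ with hodef
  set n : Fin p := ⟨p - 1, by omega⟩ with hndef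
  have hz : (z : ℕ) ≠ p - 1 := by simp only [hzdef]; omega
  have hn : (n : ℕ) = p - 1 := rfl
  have hgz : gam p z = o := by
    apply Fin.ext
    rw [gam_val]
    simp only [hzdef, hodef]
    norm_num
    omega
  have h1 : A z z * B z z = 1 := by
    have := e (z, z) (z, z)
    rw [show rmat p (z, z) (z, z) = 1 from by simp [rmat, rho_swap hz hz]] at this
    exact this.symm
  have h2 : A z z * B o n = 0 := by
    have := e (z, o) (z, n)
    rw [show rmat p (z, o) (z, n) = 0 from by
      simp only [rmat, Matrix.of_apply, rho_right hz hn, hgz]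
      rw [if_neg]
      simp only [Prod.ext_iff, hzdef, hndef, Fin.ext_iff, Fin.val_mk]
      omega] at this
    exact this.symm
  have h3' : A n z * B o n = 1 := by
    have := e (n, o) (z, n)
    rw [show rmat p (n, o) (z, n) = 1 from by
      simp [rmat, rho_right hz hn, hgz]] at this
    exact this.symm
  have hA : A z z ≠ 0 := left_ne_zero_of_mul_eq_one h1
  have hB : B o n = 0 := by
    rcases mul_eq_zero.mp h2 with h' | h'
    · exact absurd h' hA
    · exact h'
  rw [hB, mul_zero] at h3'
  exact one_ne_zero h3'.symm

lemma not_kron_swap {p : ℕ} (h3 : 3 ≤ p) :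
    ¬ ∃ A B : Matrix (Fin p) (Fin p) ℂ, rmat p = (A ⊗ₖ B) * swapMat (Fin p) := by
  rintro ⟨A, B, h⟩
  rw [swapMat_eq, mul_pmat] at h
  have e : ∀ x y : Fin p × Fin p, rmat p x y = A x.1 y.2 * B x.2 y.1 := by
    intro x y; rw [h]; rfl
  set z : Fin p := ⟨0, by omega⟩ with hzdef
  set o : Fin p := ⟨1, by omega⟩ with hodef
  set n : Fin p := ⟨p - 1, by omega⟩ with hndef
  have hz : (z : ℕ) ≠ p - 1 := by simp only [hzdef]; omega
  have hn : (n : ℕ) = p - 1 := rfl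
  have hgz : gam p z = o := by
    apply Fin.ext
    rw [gam_val]
    simp only [hzdef, hodef]
    norm_num
    omega
  have h1 : A z z * B z z = 1 := by
    have := e (z, z) (z, z)
    rw [show rmat p (z, z) (z, z) = 1 from by simp [rmat, rho_swap hz hz]] at this
    exact this.symm
  have h2 : A z z * B n n = 0 := by
    have := e (z, n) (n, z)
    rw [show rmat p (z, n) (n, z) = 0 from by
      simp only [rmat, Matrix.of_apply, rho_left hn hz, hgz]
      rw [if_neg]
      simp only [Prod.ext_iff, hzdef, hodef, Fin.ext_iff, Fin.val_mk]
      omega] at this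
    exact this.symm
  have h3' : A o z * B n n = 1 := by
    have := e (o, n) (n, z)
    rw [show rmat p (o, n) (n, z) = 1 from by
      simp [rmat, rho_left hn hz, hgz]] at this
    exact this.symm
  have hA : A z z ≠ 0 := left_ne_zero_of_mul_eq_one h1
  have hB : B n n = 0 := by
    rcases mul_eq_zero.mp h2 with h' | h'
    · exact absurd h' hA
    · exact h'
  rw [hB, mul_zero] at h3'
  exact one_ne_zero h3'.symm

theorem stmt18 (p : ℕ) (hp : Nat.Prime p) (h3 : 3 ≤ p) (hodd : Odd p) :
    rmat p * (rmat p)ᴴ = 1 ∧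
      YangBaxter (rmat p) ∧
      (¬ ∃ A B : Matrix (Fin p) (Fin p) ℂ, rmat p = A ⊗ₖ B) ∧
      (¬ ∃ A B : Matrix (Fin p) (Fin p) ℂ, rmat p = (A ⊗ₖ B) * swapMat (Fin p)) := by
  exact ⟨rmat_unitary hodd, yb_rmat hodd, not_kron h3, not_kron_swap h3⟩
end
end
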